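/- arXiv:2304.02526 — 4 statements merged into one kernel-verified Lean document; each statement's English description precedes it below -/
import Mathlib

section
/- For all natural numbers j, n with 1 ≤ j ≤ n - 1 (so that all indices are nonnegative), J_{n-1} = J_j·J_{n-j} + 2·J_{j-1}·J_{n-j-1}, where J denotes the Jacobsthal sequence. -/
def J : ℕ → ℤ
  | 0 => 0
  | 1 => 1
  | (n+2) => J (n+1) + 2 * J n

theorem J_add_two (n : ℕ) : J (n + 2) = J (n + 1) + 2 * J n := rfl

theorem J_add_add_one (m n : ℕ) : J (m + n + 1) = J (m + 1) * J (n + 1) + 2 * J m * J n := by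
  induction m generalizing n with
  | zero => simp [J]
  | succ m ih =>
    calc J (m + 1 + n + 1) = J (m + (n + 1) + 1) := by congr 1; omega
      _ = J (m + 1) * J (n + 2) + 2 * J m * J (n + 1) := ih (n + 1)
      _ = J (m + 2) * J (n + 1) + 2 * J (m + 1) * J n := by
        rw [J_add_two n, J_add_two m]; ring

theorem jacobsthal_split (j n : ℕ) (hj : 1 ≤ j) (hjn : j ≤ n - 1) :
    J (n-1) = J j * J (n-j) + 2 * J (j-1) * J (n-j-1) := by
  have h := J_add_add_one (j - 1) (n - j - 1)
  rwa [show j - 1 + (n - j - 1) + 1 = n - 1 by omega, Nat.sub_add_cancel hj,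
    show n - j - 1 + 1 = n - j by omega] at h
end

section
/- For every natural number n ≥ 1, the sum over j from 1 to n of 2^j·J_{n-j} equals (2/3)·(n·J_{n-1} + (n-1)·J_n); equivalently, 3·∑_{j=1}^{n} 2^j·J_{n-j} = 2·(n·J_{n-1} + (n-1)·J_n). -/
open Finset

theorem sum_Icc_one_pow_mul_succ_sub {R : Type*} [CommSemiring R] (a : R) (f : ℕ → R) (m : ℕ) :
    ∑ j ∈ Icc 1 (m + 1), a ^ j * f (m + 1 - j) =
      a * f m + a * ∑ j ∈ Icc 1 m, a ^ j * f (m - j) := by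
  rw [← insert_Icc_add_one_left_eq_Icc (by omega), sum_insert (by simp), ← map_add_right_Icc,
    sum_map, mul_sum]
  simp [pow_succ, mul_assoc, mul_comm]

-- The identity at `n = m + 1`, where `n - 1` is not truncated.
theorem three_mul_sum_pow_mul_J_succ (m : ℕ) :
    3 * ∑ j ∈ Icc 1 (m + 1), 2 ^ j * J (m + 1 - j) =
      2 * ((m + 1 : ℤ) * J m + m * J (m + 1)) := by
  induction m with
  | zero => simp [J]
  | succ m ih =>
    rw [sum_Icc_one_pow_mul_succ_sub, J]
    push_cast
    linear_combination 2 * ih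

theorem jacobsthal_power_sum_general (n : ℕ) :
    3 * ∑ j ∈ Finset.Icc 1 n, 2 ^ j * J (n - j) =
      2 * ((n : ℤ) * J (n-1) + ((n : ℤ) - 1) * J n) := by
  cases n with
  | zero => simp [J]
  | succ m =>
    rw [three_mul_sum_pow_mul_J_succ, Nat.add_sub_cancel]
    push_cast
    ring

theorem jacobsthal_power_sum (n : ℕ) (hn : 1 ≤ n) :
    3 * ∑ j ∈ Finset.Icc 1 n, 2 ^ j * J (n - j) =
      2 * ((n : ℤ) * J (n-1) + ((n : ℤ) - 1) * J n) :=
  jacobsthal_power_sum_general n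
end

section
/- Let N ≥ 5 and let H_N be the (N-1)×(N-1) integer matrix with entries H_N(i,i) = 2 for 1 ≤ i ≤ N-1, H_N(i,j) = -1 if i - j ≡ 1 or 2 (mod N) with 1 ≤ i,j ≤ N-1, interpreting indices in Z_N \ {0}, and H_N(i,j) = 0 otherwise. Then H_N is invertible over the rationals, and its inverse S_N has entries S_N(i,j) given by: S_N(i,i+1) = J_i·J_{N-i-1}/J_N; S_N(i,j) = (J_{i-j+1}·(J_{N-i+j-2}+J_{N-i+j-1}) - (-1)^{i+j}·J_{j-1}·J_{N-i-1})/J_N when j < i+1 and (i,j) ≠ (N-1,1); S_N(i,j) = J_i·J_{N-j}·(J_{j-i-1}+J_{j-i})/J_N when j > i+1; and S_N(N-1,1) = J_{N-1}/J_N, where J is the Jacobsthal sequence. -/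
/-- The transpose of the reduced Laplacian of `Cay(Z_N, {+1,+2})`:
entries indexed by `i, j ∈ {1, …, N-1}` (realized as `Fin (N-1)` shifted by one). -/
def HMat (N : ℕ) : Matrix (Fin (N-1)) (Fin (N-1)) ℚ :=
  fun i j =>
    let a := i.val + 1
    let b := j.val + 1
    if a = b then 2
    else if a % N = (b + 1) % N ∨ a % N = (b + 2) % N then -1
    else 0

/-- The explicit candidate inverse, with entries given by Jacobsthal numbers. -/
def SMat (N : ℕ) : Matrix (Fin (N-1)) (Fin (N-1)) ℚ :=
  fun i j =>
    let a := i.val + 1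
    let b := j.val + 1
    if a = N - 1 ∧ b = 1 then (J (N-1) : ℚ) / (J N : ℚ)
    else if b = a + 1 then (J a : ℚ) * (J (N-a-1) : ℚ) / (J N : ℚ)
    else if b < a + 1 then
      ((J (a-b+1) : ℚ) * ((J (N-a+b-2) : ℚ) + (J (N-a+b-1) : ℚ))
        - ((-1 : ℚ)) ^ (a+b) * (J (b-1) : ℚ) * (J (N-a-1) : ℚ)) / (J N : ℚ)
    else (J a : ℚ) * (J (N-b) : ℚ) * ((J (b-a-1) : ℚ) + (J (b-a) : ℚ)) / (J N : ℚ)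

lemma Jrec (n : ℕ) : J (n+2) = J (n+1) + 2 * J n := rfl

lemma Jrec' (a b c : ℕ) (h1 : a = c+2) (h2 : b = c+1) : J a = J b + 2 * J c := by
  subst h1 h2; exact Jrec c

lemma Jadd (m n : ℕ) : J (m+n+1) = J (m+1) * J (n+1) + 2 * J m * J n := by
  induction m using Nat.twoStepInduction with
  | zero => simp [J]
  | one =>
    rw [show 1+n+1 = n+2 from by omega, Jrec, show (1:ℕ)+1 = 2 from rfl]
    norm_num [show J 1 = 1 from rfl, show J 2 = 1 from rfl]
  | more m ih1 ih2 =>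
    rw [Jrec' (m+2+n+1) (m+1+n+1) (m+n+1) (by omega) (by omega), ih1, ih2,
        Jrec' (m+2+1) (m+2) (m+1) (by omega) (by omega),
        Jrec' (m+1+1) (m+1) m (by omega) (by omega)]
    ring

lemma Jpos : ∀ n : ℕ, 0 < J (n+1) := by
  have h : ∀ n : ℕ, 0 ≤ J n ∧ 0 < J (n+1) := by
    intro n
    induction n using Nat.twoStepInduction with
    | zero => exact ⟨by decide, by decide⟩
    | one => exact ⟨by decide, by decide⟩
    | more m ih1 ih2 =>
      refine ⟨by rw [Jrec]; linarith [ih1.1, ih2.2, ih1.2], ?_⟩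
      rw [Jrec' (m+2+1) (m+2) (m+1) (by omega) (by omega), Jrec]
      linarith [ih1.1, ih1.2, ih2.2]
  exact fun n => (h n).2

lemma Jq (a b c : ℕ) (h1 : a = c + 2) (h2 : b = c + 1) :
    (J a : ℚ) = (J b : ℚ) + 2 * (J c : ℚ) := by
  subst h1 h2; rw [Jrec]; push_cast; ring

lemma JaddQ (p q r m n : ℕ) (h1 : p = m + n + 1) (h2 : q = m + 1) (h3 : r = n + 1) :
    (J p : ℚ) = (J q : ℚ) * (J r : ℚ) + 2 * (J m : ℚ) * (J n : ℚ) := by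
  subst h1 h2 h3; rw [Jadd]; push_cast; ring

lemma Hentry (N : ℕ) (hN : 5 ≤ N) (i j : Fin (N-1)) :
    HMat N i j = (if (j:ℕ) = (i:ℕ) then 2 else 0)
      + (if (j:ℕ) + 1 = (i:ℕ) then -1 else 0)
      + (if (j:ℕ) + 2 = (i:ℕ) then -1 else 0)
      + (if (i:ℕ) = 0 ∧ (j:ℕ) = N - 2 then -1 else 0) := by
  have hiv := i.isLt; have hjv := j.isLt
  have hmod : ((i:ℕ)+1) % N = (i:ℕ)+1 := Nat.mod_eq_of_lt (by omega)
  simp only [HMat]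
  rcases lt_trichotomy ((j:ℕ)+3) N with h3 | h3 | h3
  · rw [Nat.mod_eq_of_lt (show (j:ℕ)+1+1 < N by omega),
        Nat.mod_eq_of_lt (show (j:ℕ)+1+2 < N by omega), hmod]
    try simp only [Nat.add_one_ne_zero, or_false, false_or]
    split_ifs <;> first | omega | norm_num
  · rw [Nat.mod_eq_of_lt (show (j:ℕ)+1+1 < N by omega),
        show (j:ℕ)+1+2 = N from by omega, Nat.mod_self, hmod]
    try simp only [Nat.add_one_ne_zero, or_false, false_or]
    split_ifs <;> first | omega | norm_num
  · rw [show (j:ℕ)+1+1 = N from by omega, Nat.mod_self,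
        show (j:ℕ)+1+2 = N+1 from by omega, Nat.add_mod_left,
        Nat.mod_eq_of_lt (show 1 < N by omega), hmod]
    try simp only [Nat.add_one_ne_zero, or_false, false_or]
    split_ifs <;> first | omega | norm_num

lemma sum_ite_val {n : ℕ} (c : ℕ) (hc : c < n) (g : Fin n → ℚ) :
    (∑ j : Fin n, if (j : ℕ) = c then g j else 0) = g ⟨c, hc⟩ := by
  rw [Finset.sum_eq_single (⟨c, hc⟩ : Fin n)]
  · simp
  · intro b _ hb
    exact if_neg (fun h => hb (Fin.ext h))
  · intro h; exact absurd (Finset.mem_univ _) h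

lemma rowsum2 (N : ℕ) (hN : 5 ≤ N) (i u v : Fin (N-1)) (h2 : 2 ≤ (i:ℕ))
    (hu : (u:ℕ) + 1 = (i:ℕ)) (hv : (v:ℕ) + 2 = (i:ℕ)) (f : Fin (N-1) → ℚ) :
    ∑ j, HMat N i j * f j = 2 * f i - f u - f v := by
  have hiv := i.isLt
  have h1 : ∀ j : Fin (N-1), HMat N i j * f j =
      (if (j:ℕ) = (i:ℕ) then 2 * f j else 0) +
      ((if (j:ℕ) = (u:ℕ) then -f j else 0) + (if (j:ℕ) = (v:ℕ) then -f j else 0)) := by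
    intro j
    rw [Hentry N hN i j,
        if_neg (show ¬((i:ℕ) = 0 ∧ (j:ℕ) = N-2) from by omega)]
    simp only [show ((j:ℕ)+1 = (i:ℕ)) = ((j:ℕ) = (u:ℕ)) from propext (by omega),
        show ((j:ℕ)+2 = (i:ℕ)) = ((j:ℕ) = (v:ℕ)) from propext (by omega)]
    split_ifs <;> ring
  rw [Finset.sum_congr rfl (fun j _ => h1 j), Finset.sum_add_distrib, Finset.sum_add_distrib,
      sum_ite_val (i:ℕ) i.isLt, sum_ite_val (u:ℕ) u.isLt, sum_ite_val (v:ℕ) v.isLt]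
  simp only [Fin.eta]
  ring

lemma rowsum1 (N : ℕ) (hN : 5 ≤ N) (i z : Fin (N-1)) (h1 : (i:ℕ) = 1) (hz : (z:ℕ) = 0)
    (f : Fin (N-1) → ℚ) :
    ∑ j, HMat N i j * f j = 2 * f i - f z := by
  have hiv := i.isLt
  have key : ∀ j : Fin (N-1), HMat N i j * f j =
      (if (j:ℕ) = (i:ℕ) then 2 * f j else 0) + (if (j:ℕ) = (z:ℕ) then -f j else 0) := by
    intro j
    rw [Hentry N hN i j,
        if_neg (show ¬((i:ℕ) = 0 ∧ (j:ℕ) = N-2) from by omega),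
        if_neg (show ¬((j:ℕ)+2 = (i:ℕ)) from by omega)]
    simp only [show ((j:ℕ)+1 = (i:ℕ)) = ((j:ℕ) = (z:ℕ)) from propext (by omega)]
    split_ifs <;> ring
  rw [Finset.sum_congr rfl (fun j _ => key j), Finset.sum_add_distrib,
      sum_ite_val (i:ℕ) i.isLt, sum_ite_val (z:ℕ) z.isLt]
  simp only [Fin.eta]
  ring

lemma rowsum0 (N : ℕ) (hN : 5 ≤ N) (i w : Fin (N-1)) (h0 : (i:ℕ) = 0) (hw : (w:ℕ) = N-2)
    (f : Fin (N-1) → ℚ) :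
    ∑ j, HMat N i j * f j = 2 * f i - f w := by
  have hiv := i.isLt
  have key : ∀ j : Fin (N-1), HMat N i j * f j =
      (if (j:ℕ) = (i:ℕ) then 2 * f j else 0) + (if (j:ℕ) = (w:ℕ) then -f j else 0) := by
    intro j
    have hjv := j.isLt
    rw [Hentry N hN i j,
        if_neg (show ¬((j:ℕ)+1 = (i:ℕ)) from by omega),
        if_neg (show ¬((j:ℕ)+2 = (i:ℕ)) from by omega)]
    simp only [show ((i:ℕ) = 0 ∧ (j:ℕ) = N-2) = ((j:ℕ) = (w:ℕ)) from
      propext (by constructor <;> omega)]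
    split_ifs <;> ring
  rw [Finset.sum_congr rfl (fun j _ => key j), Finset.sum_add_distrib,
      sum_ite_val (i:ℕ) i.isLt, sum_ite_val (w:ℕ) w.isLt]
  simp only [Fin.eta]
  ring

lemma S_low (N : ℕ) (hN : 5 ≤ N) (m t g : ℕ) (i k : Fin (N-1))
    (hk : (k:ℕ) = m) (hi : (i:ℕ) = m + t) (hNe : N = m + t + g + 2) :
    SMat N i k = ((J (t+1) : ℚ) * ((J (g+m) : ℚ) + (J (g+m+1) : ℚ))
      - (-1:ℚ)^t * (J m : ℚ) * (J g : ℚ)) / (J N : ℚ) := by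
  have hiv := i.isLt
  simp only [SMat]
  by_cases hsp : g = 0 ∧ m = 0
  · obtain ⟨hg0, hm0⟩ := hsp
    subst hg0 hm0
    rw [if_pos (by omega), show N - 1 = t + 1 from by omega]
    norm_num [show J 0 = 0 from rfl, show J 1 = 1 from rfl]
  · rw [if_neg (by omega), if_neg (show ¬((k:ℕ)+1 = (i:ℕ)+1+1) from by omega),
        if_pos (show (k:ℕ)+1 < (i:ℕ)+1+1 from by omega), hk, hi,
        show m + t + 1 - (m + 1) + 1 = t + 1 from by omega,
        show N - (m + t + 1) + (m + 1) - 2 = g + m from by omega,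
        show N - (m + t + 1) + (m + 1) - 1 = g + m + 1 from by omega,
        show m + 1 - 1 = m from by omega,
        show N - (m + t + 1) - 1 = g from by omega,
        show m + t + 1 + (m + 1) = 2*(m+1) + t from by omega,
        pow_add, pow_mul, neg_one_sq, one_pow, one_mul]

lemma S_super (N : ℕ) (hN : 5 ≤ N) (m g : ℕ) (i k : Fin (N-1))
    (hk : (k:ℕ) = m + 1) (hi : (i:ℕ) = m) (hNe : N = m + g + 3) :
    SMat N i k = (J (m+1) : ℚ) * (J (g+1) : ℚ) / (J N : ℚ) := by
  have hiv := i.isLt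
  simp only [SMat]
  rw [if_neg (by omega), if_pos (show (k:ℕ)+1 = (i:ℕ)+1+1 from by omega), hi,
      show N - (m+1) - 1 = g + 1 from by omega]

lemma S_up (N : ℕ) (hN : 5 ≤ N) (m t g : ℕ) (i k : Fin (N-1))
    (hk : (k:ℕ) = m + t + 2) (hi : (i:ℕ) = m) (hNe : N = m + t + g + 4) :
    SMat N i k = (J (m+1) : ℚ) * (J (g+1) : ℚ) * ((J (t+1) : ℚ) + (J (t+2) : ℚ)) / (J N : ℚ) := by
  have hkv := k.isLt
  simp only [SMat]
  rw [if_neg (by omega), if_neg (show ¬((k:ℕ)+1 = (i:ℕ)+1+1) from by omega),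
      if_neg (show ¬((k:ℕ)+1 < (i:ℕ)+1+1) from by omega), hk, hi,
      show N - (m+t+2+1) = g + 1 from by omega,
      show m+t+2+1 - (m+1) - 1 = t + 1 from by omega,
      show m+t+2+1 - (m+1) = t + 2 from by omega]

theorem HMat_inverse (N : ℕ) (hN : 5 ≤ N) :
    HMat N * SMat N = 1 ∧ SMat N * HMat N = 1 := by
  have hDpos : (0:ℤ) < J N := by
    have := Jpos (N-1); rwa [show N-1+1 = N from by omega] at this
  have hD : (J N : ℚ) ≠ 0 := by exact_mod_cast hDpos.ne'
  have J0 : J 0 = 0 := rfl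
  have J1 : J 1 = 1 := rfl
  have J2 : J 2 = 1 := rfl
  have J3 : J 3 = 3 := rfl
  have main : HMat N * SMat N = 1 := by
    ext i k
    have hiv := i.isLt
    have hkv := k.isLt
    rw [Matrix.mul_apply, Matrix.one_apply]
    by_cases hi0 : (i:ℕ) = 0
    · obtain ⟨w, hw⟩ : ∃ w : Fin (N-1), (w:ℕ) = N-2 := ⟨⟨N-2, by omega⟩, rfl⟩
      rw [rowsum0 N hN i w hi0 hw]
      by_cases hk0 : (k:ℕ) = 0
      · rw [if_pos (Fin.ext (by omega))]
        obtain ⟨g, hg⟩ : ∃ g, N = g + 2 := ⟨N-2, by omega⟩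
        rw [S_low N hN 0 0 g i k hk0 (by omega) (by omega),
            S_low N hN 0 g 0 w k hk0 (by omega) (by omega)]
        simp only [J0, J1, Nat.add_zero, Nat.zero_add, Int.cast_zero, Int.cast_one,
          pow_zero, one_mul, mul_one, mul_zero, zero_mul, sub_zero, Nat.reduceAdd]
        simp only [← mul_div_assoc, div_sub_div_same]
        rw [div_eq_iff hD, Jq N (g+1) g (by omega) rfl]
        ring
      · rw [if_neg (show ¬i = k from by simp only [Fin.ext_iff]; omega)]
        by_cases hk1 : (k:ℕ) = 1
        · obtain ⟨g, hg⟩ : ∃ g, N = g + 3 := ⟨N-3, by omega⟩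
          rw [S_super N hN 0 g i k hk1 hi0 (by omega),
              S_low N hN 1 g 0 w k hk1 (by omega) (by omega)]
          simp only [J0, J1, J2, Nat.add_zero, Nat.zero_add, Int.cast_zero, Int.cast_one,
            pow_zero, one_mul, mul_one, mul_zero, zero_mul, sub_zero, Nat.reduceAdd]
          simp only [← mul_div_assoc, div_sub_div_same]
          rw [div_eq_iff hD]
          ring
        · obtain ⟨t, g, hk2, hg⟩ : ∃ t g, (k:ℕ) = t+2 ∧ N = t+g+4 :=
            ⟨(k:ℕ)-2, N-(k:ℕ)-2, by omega, by omega⟩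
          rw [S_up N hN 0 t g i k (by omega) hi0 (by omega),
              S_low N hN (t+2) g 0 w k hk2 (by omega) (by omega)]
          simp only [J0, J1, Nat.add_zero, Nat.zero_add, Int.cast_zero, Int.cast_one,
            pow_zero, one_mul, mul_one, mul_zero, zero_mul, sub_zero, Nat.reduceAdd]
          simp only [← mul_div_assoc, div_sub_div_same]
          rw [div_eq_iff hD, Jq (t+2+1) (t+2) (t+1) (by omega) (by omega)]
          ring
    · by_cases hi1 : (i:ℕ) = 1
      · obtain ⟨z, hz⟩ : ∃ z : Fin (N-1), (z:ℕ) = 0 := ⟨⟨0, by omega⟩, rfl⟩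
        rw [rowsum1 N hN i z hi1 hz]
        by_cases hk0 : (k:ℕ) = 0
        · rw [if_neg (show ¬i = k from by simp only [Fin.ext_iff]; omega)]
          obtain ⟨g, hg⟩ : ∃ g, N = g + 3 := ⟨N-3, by omega⟩
          rw [S_low N hN 0 1 g i k hk0 (by omega) (by omega),
              S_low N hN 0 0 (g+1) z k hk0 (by omega) (by omega)]
          simp only [J0, J1, J2, Nat.add_zero, Nat.zero_add, Int.cast_zero, Int.cast_one,
            pow_zero, pow_one, one_mul, mul_one, mul_zero, zero_mul, sub_zero, Nat.reduceAdd]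
          simp only [← mul_div_assoc, div_sub_div_same]
          rw [div_eq_iff hD, Jq (g+1+1) (g+1) g (by omega) (by omega)]
          ring
        · by_cases hk1 : (k:ℕ) = 1
          · rw [if_pos (Fin.ext (by omega))]
            obtain ⟨g, hg⟩ : ∃ g, N = g + 3 := ⟨N-3, by omega⟩
            rw [S_low N hN 1 0 g i k hk1 (by omega) (by omega),
                S_super N hN 0 g z k (by omega) (by omega) (by omega)]
            simp only [J0, J1, Nat.add_zero, Nat.zero_add, Int.cast_zero, Int.cast_one,
              pow_zero, one_mul, mul_one, mul_zero, zero_mul, sub_zero, Nat.reduceAdd]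
            simp only [← mul_div_assoc, div_sub_div_same]
            rw [div_eq_iff hD, Jq N (g+2) (g+1) (by omega) (by omega),
                Jq (g+2) (g+1) g (by omega) (by omega)]
            ring
          · rw [if_neg (show ¬i = k from by simp only [Fin.ext_iff]; omega)]
            by_cases hk2 : (k:ℕ) = 2
            · obtain ⟨g, hg⟩ : ∃ g, N = g + 4 := ⟨N-4, by omega⟩
              rw [S_super N hN 1 g i k (by omega) (by omega) (by omega),
                  S_up N hN 0 0 g z k (by omega) (by omega) (by omega)]
              simp only [J0, J1, J2, Nat.add_zero, Nat.zero_add, Int.cast_zero, Int.cast_one,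
                pow_zero, one_mul, mul_one, mul_zero, zero_mul, sub_zero, Nat.reduceAdd]
              simp only [← mul_div_assoc, div_sub_div_same]
              rw [div_eq_iff hD]
              ring
            · obtain ⟨t, g, hk3, hg⟩ : ∃ t g, (k:ℕ) = t+3 ∧ N = t+g+5 :=
                ⟨(k:ℕ)-3, N-(k:ℕ)-2, by omega, by omega⟩
              rw [S_up N hN 1 t g i k (by omega) (by omega) (by omega),
                  S_up N hN 0 (t+1) g z k (by omega) (by omega) (by omega)]
              simp only [J0, J1, J2, Nat.add_zero, Nat.zero_add, Int.cast_zero, Int.cast_one,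
                pow_zero, one_mul, mul_one, mul_zero, zero_mul, sub_zero, Nat.reduceAdd]
              rw [show t+1+1 = t+2 from rfl]
              simp only [← mul_div_assoc, div_sub_div_same]
              rw [div_eq_iff hD, Jq (t+1+2) (t+2) (t+1) (by omega) (by omega)]
              ring
      · -- 2 ≤ i
        obtain ⟨u, hu⟩ : ∃ u : Fin (N-1), (u:ℕ)+1 = (i:ℕ) :=
          ⟨⟨(i:ℕ)-1, by omega⟩, show (i:ℕ)-1+1 = (i:ℕ) from by omega⟩
        obtain ⟨v, hv⟩ : ∃ v : Fin (N-1), (v:ℕ)+2 = (i:ℕ) :=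
          ⟨⟨(i:ℕ)-2, by omega⟩, show (i:ℕ)-2+2 = (i:ℕ) from by omega⟩
        rw [rowsum2 N hN i u v (by omega) hu hv]
        by_cases hc1 : (k:ℕ) + 2 ≤ (i:ℕ)
        · rw [if_neg (show ¬i = k from by simp only [Fin.ext_iff]; omega)]
          obtain ⟨m, s, g, hm, hs, hg⟩ : ∃ m s g, (k:ℕ) = m ∧ (i:ℕ) = m+s+2 ∧ N = m+s+g+4 :=
            ⟨(k:ℕ), (i:ℕ)-(k:ℕ)-2, N-(i:ℕ)-2, rfl, by omega, by omega⟩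
          rw [S_low N hN m (s+2) g i k hm (by omega) (by omega),
              S_low N hN m (s+1) (g+1) u k hm (by omega) (by omega),
              S_low N hN m s (g+2) v k hm (by omega) (by omega)]
          rw [show g+1+m+1 = g+m+2 from by omega, show g+1+m = g+m+1 from by omega,
              show g+2+m+1 = g+m+3 from by omega, show g+2+m = g+m+2 from by omega,
              show s+1+1 = s+2 from rfl]
          simp only [← mul_div_assoc, div_sub_div_same]
          rw [div_eq_iff hD,
              Jq (s+2+1) (s+2) (s+1) (by omega) (by omega),
              Jq (g+m+3) (g+m+2) (g+m+1) (by omega) (by omega),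
              Jq (s+2) (s+1) s (by omega) (by omega),
              Jq (g+m+2) (g+m+1) (g+m) (by omega) (by omega),
              Jq (g+2) (g+1) g (by omega) (by omega)]
          ring
        · by_cases hc2 : (k:ℕ) + 1 = (i:ℕ)
          · rw [if_neg (show ¬i = k from by simp only [Fin.ext_iff]; omega)]
            obtain ⟨q, g, hq, hg⟩ : ∃ q g, (k:ℕ) = q+1 ∧ N = q+g+4 :=
              ⟨(k:ℕ)-1, N-(i:ℕ)-2, by omega, by omega⟩
            rw [S_low N hN (q+1) 1 g i k hq (by omega) (by omega),
                S_low N hN (q+1) 0 (g+1) u k hq (by omega) (by omega),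
                S_super N hN q (g+1) v k (by omega) (by omega) (by omega)]
            rw [show g+(q+1)+1 = g+q+2 from by omega, show g+(q+1) = g+q+1 from by omega,
                show g+1+(q+1)+1 = g+q+3 from by omega, show g+1+(q+1) = g+q+2 from by omega,
                show g+1+1 = g+2 from rfl]
            simp only [J0, J1, J2, Nat.add_zero, Nat.zero_add, Int.cast_zero, Int.cast_one,
              pow_zero, pow_one, one_mul, mul_one, mul_zero, zero_mul, sub_zero, Nat.reduceAdd]
            simp only [← mul_div_assoc, div_sub_div_same]
            rw [div_eq_iff hD,
                Jq (g+q+3) (g+q+2) (g+q+1) (by omega) (by omega),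
                Jq (g+q+2) (g+q+1) (g+q) (by omega) (by omega),
                Jq (g+2) (g+1) g (by omega) (by omega)]
            ring
          · by_cases hc3 : (k:ℕ) = (i:ℕ)
            · rw [if_pos (Fin.ext (by omega))]
              obtain ⟨e, g, he, hg⟩ : ∃ e g, (i:ℕ) = e+2 ∧ N = e+g+4 :=
                ⟨(i:ℕ)-2, N-(i:ℕ)-2, by omega, by omega⟩
              rw [S_low N hN (e+2) 0 g i k (by omega) (by omega) (by omega),
                  S_super N hN (e+1) g u k (by omega) (by omega) (by omega),
                  S_up N hN e 0 g v k (by omega) (by omega) (by omega)]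
              rw [show g+(e+2)+1 = g+e+3 from by omega, show g+(e+2) = g+e+2 from by omega,
                  show e+1+1 = e+2 from rfl]
              simp only [J0, J1, J2, Nat.add_zero, Nat.zero_add, Int.cast_zero, Int.cast_one,
                pow_zero, one_mul, mul_one, mul_zero, zero_mul, sub_zero, Nat.reduceAdd]
              simp only [← mul_div_assoc, div_sub_div_same]
              rw [div_eq_iff hD,
                  JaddQ N (e+3) (g+2) (e+2) (g+1) (by omega) rfl rfl,
                  JaddQ (g+e+3) (e+2) (g+2) (e+1) (g+1) (by omega) rfl rfl,
                  JaddQ (g+e+2) (e+2) (g+1) (e+1) g (by omega) rfl rfl,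
                  Jq (e+3) (e+2) (e+1) (by omega) (by omega),
                  Jq (g+2) (g+1) g (by omega) (by omega),
                  Jq (e+2) (e+1) e (by omega) (by omega)]
              ring
            · by_cases hc4 : (k:ℕ) = (i:ℕ) + 1
              · rw [if_neg (show ¬i = k from by simp only [Fin.ext_iff]; omega)]
                obtain ⟨x, g, hx, hg⟩ : ∃ x g, (i:ℕ) = x+2 ∧ N = x+g+5 :=
                  ⟨(i:ℕ)-2, N-(k:ℕ)-2, by omega, by omega⟩
                rw [S_super N hN (x+2) g i k (by omega) (by omega) (by omega),
                    S_up N hN (x+1) 0 g u k (by omega) (by omega) (by omega),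
                    S_up N hN x 1 g v k (by omega) (by omega) (by omega)]
                simp only [J0, J1, J2, J3, Nat.add_zero, Nat.zero_add, Int.cast_zero,
                  Int.cast_one, Int.cast_ofNat, pow_zero, one_mul, mul_one, mul_zero,
                  zero_mul, sub_zero, Nat.reduceAdd]
                rw [show x+1+1 = x+2 from rfl]
                simp only [← mul_div_assoc, div_sub_div_same]
                rw [div_eq_iff hD, Jq (x+2+1) (x+2) (x+1) (by omega) (by omega)]
                ring
              · rw [if_neg (show ¬i = k from by simp only [Fin.ext_iff]; omega)]
                obtain ⟨x, t, g, hx, hk', hg⟩ :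
                    ∃ x t g, (i:ℕ) = x+2 ∧ (k:ℕ) = x+t+4 ∧ N = x+t+g+6 :=
                  ⟨(i:ℕ)-2, (k:ℕ)-(i:ℕ)-2, N-(k:ℕ)-2, by omega, by omega, by omega⟩
                rw [S_up N hN (x+2) t g i k (by omega) (by omega) (by omega),
                    S_up N hN (x+1) (t+1) g u k (by omega) (by omega) (by omega),
                    S_up N hN x (t+2) g v k (by omega) (by omega) (by omega)]
                rw [show x+1+1 = x+2 from rfl, show t+1+1 = t+2 from rfl]
                simp only [← mul_div_assoc, div_sub_div_same]
                rw [div_eq_iff hD,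
                    Jq (x+2+1) (x+2) (x+1) (by omega) (by omega),
                    Jq (t+2+2) (t+2+1) (t+2) (by omega) (by omega),
                    Jq (t+2+1) (t+2) (t+1) (by omega) (by omega)]
                ring
  exact ⟨main, mul_eq_one_comm.mp main⟩
end

section
/- For every natural number N ≥ 1, 3·∑_{j=1}^{N} 2^j·J_{N-j} = 2·N·J_{N-1} + 2·(N-1)·J_N. -/
lemma jacobsthal_T (N : ℕ) :
    3 * ∑ j ∈ Finset.range (N+1), 2 ^ j * J (N - j) =
      ((N : ℤ) + 1) * J N + (N : ℤ) * J (N+1) := by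
  induction N with
  | zero => simp [J]
  | succ n ih =>
    have hshift : ∑ j ∈ Finset.range (n+2), 2 ^ j * J (n+1 - j)
        = (∑ j ∈ Finset.range (n+1), 2 ^ (j+1) * J (n - j)) + 2 ^ 0 * J (n+1) := by
      rw [Finset.sum_range_succ']
      simp [Nat.succ_sub_succ]
    have h2 : ∑ j ∈ Finset.range (n+1), 2 ^ (j+1) * J (n - j)
        = 2 * ∑ j ∈ Finset.range (n+1), 2 ^ j * J (n - j) := by
      rw [Finset.mul_sum]
      exact Finset.sum_congr rfl fun j _ => by ring
    rw [hshift, h2]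
    have hJ : J (n+2) = J (n+1) + 2 * J n := rfl
    push_cast
    rw [hJ]
    linarith [ih]

theorem jacobsthal_power_sum' (N : ℕ) (hN : 1 ≤ N) :
    3 * ∑ j ∈ Finset.Icc 1 N, 2 ^ j * J (N - j) =
      2 * (N : ℤ) * J (N-1) + 2 * ((N : ℤ) - 1) * J N := by
  obtain ⟨M, rfl⟩ := Nat.exists_eq_add_of_le hN
  have hIcc : ∑ j ∈ Finset.Icc 1 (1+M), 2 ^ j * J (1 + M - j)
      = ∑ j ∈ Finset.range (M+1), 2 ^ (1+j) * J (M - j) := by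
    rw [← Finset.Ico_add_one_right_eq_Icc, Finset.sum_Ico_eq_sum_range]
    apply Finset.sum_congr (by congr 1; omega)
    intro j _
    congr 2
    omega
  have h2 : ∑ j ∈ Finset.range (M+1), 2 ^ (1+j) * J (M - j)
      = 2 * ∑ j ∈ Finset.range (M+1), 2 ^ j * J (M - j) := by
    rw [Finset.mul_sum]
    exact Finset.sum_congr rfl fun j _ => by ring
  have hT := jacobsthal_T M
  have hsub : 1 + M - 1 = M := by omega
  rw [hIcc, h2, hsub]
  have : J (1+M) = J (M+1) := by rw [Nat.add_comm]
  rw [this]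
  push_cast
  linarith
end
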